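/- Let f : {0,1}^n → ℝ have the bounded-differences property with constant c, and let X = (X_1,...,X_n) be independent Bernoulli(p) variables. Then the Doob martingale M_k = E[f(X) | X_1,...,X_k] has increments bounded by |M_k - M_{k-1}| ≤ c almost surely, and the conditional variance satisfies Var(M_k - M_{k-1} | X_1,...,X_{k-1}) ≤ c² p (1 - p). -/

import Mathlib

open MeasureTheory ProbabilityTheory Real

/-- Bounded differences with constant `c`. -/
def BoundedDifferences {n : ℕ} (f : (Fin n → Bool) → ℝ) (c : ℝ) : Prop :=
  ∀ (x x' : Fin n → Bool) (i : Fin n),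
    (∀ j : Fin n, j ≠ i → x j = x' j) → |f x - f x'| ≤ c

/-- The σ-algebra generated by the first `k` of the variables `X_1, ..., X_n`. -/
def firstCoords {Ω : Type*} [MeasurableSpace Ω] {n : ℕ}
    (X : Fin n → Ω → Bool) (k : ℕ) : MeasurableSpace Ω :=
  MeasurableSpace.comap (fun ω => fun i : {i : Fin n // (i : ℕ) < k} => X i.1 ω)
    inferInstance

/-!
Given the coordinates `i < k`, the conditional expectation of `f(X)` is the average `G_k` of `f`
over independent Bernoulli(p) resamplings of the coordinates `i ≥ k`, so `M_k = G_k(X)`. Averaging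
over the coordinate `j = k - 1` revealed at step `k` gives
`G_j = p G_k(X[j ↦ 1]) + (1 - p) G_k(X[j ↦ 0])`, so `M_k - M_j` is `(1 - p) Δ` or `-p Δ` according
to `X_j`, where `Δ = G_k(X[j ↦ 1]) - G_k(X[j ↦ 0])` does not depend on `X_j` and `|Δ| ≤ c` by
bounded differences. Averaging the square over `X_j` gives
`(p (1 - p)² + (1 - p) p²) Δ² = p (1 - p) Δ² ≤ c² p (1 - p)`.
-/

def bernoulliWeight (p : ℝ) (b : Bool) : ℝ := if b then p else 1 - p

/-- The expectation of `F` under the product Bernoulli(p) law on `ι → Bool`. -/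
def cubeMean {ι : Type*} [Fintype ι] [DecidableEq ι] (p : ℝ) (F : (ι → Bool) → ℝ) : ℝ :=
  ∑ t, (∏ i, bernoulliWeight p (t i)) * F t

section cubeMean

variable {ι : Type*} [Fintype ι] [DecidableEq ι] {p : ℝ}

lemma bernoulliWeight_nonneg (hp : 0 ≤ p) (hp1 : p ≤ 1) (b : Bool) : 0 ≤ bernoulliWeight p b := by
  cases b <;> simp [bernoulliWeight] <;> linarith

lemma cubeMean_comp_eval (g : Bool → ℝ) (j : ι) :
    cubeMean p (fun t => g (t j)) = p * g true + (1 - p) * g false := by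
  have h := Fintype.prod_sum fun (i : ι) (b : Bool) =>
    bernoulliWeight p b * if j = i then g b else 1
  simp only [Finset.prod_mul_distrib, Finset.prod_ite_eq, Finset.mem_univ, if_true] at h
  rw [cubeMean, ← h, Finset.prod_eq_single j (fun i _ hij => by simp [Ne.symm hij, bernoulliWeight])
    (by simp)]
  simp [bernoulliWeight]

lemma sum_prod_bernoulliWeight (p : ℝ) : ∑ t : ι → Bool, ∏ i, bernoulliWeight p (t i) = 1 := by
  rw [← Fintype.prod_sum]
  simp [bernoulliWeight]

lemma cubeMean_const (p a : ℝ) : cubeMean (ι := ι) p (fun _ => a) = a := by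
  rw [cubeMean, ← Finset.sum_mul, sum_prod_bernoulliWeight, one_mul]

lemma cubeMean_add (F G : (ι → Bool) → ℝ) :
    cubeMean p (fun t => F t + G t) = cubeMean p F + cubeMean p G := by
  simp only [cubeMean, mul_add, Finset.sum_add_distrib]

lemma cubeMean_sub (F G : (ι → Bool) → ℝ) :
    cubeMean p (fun t => F t - G t) = cubeMean p F - cubeMean p G := by
  simp only [cubeMean, mul_sub, Finset.sum_sub_distrib]

lemma cubeMean_const_mul (a : ℝ) (F : (ι → Bool) → ℝ) :
    cubeMean p (fun t => a * F t) = a * cubeMean p F := by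
  simp only [cubeMean, Finset.mul_sum]
  exact Finset.sum_congr rfl fun _ _ => by ring

lemma cubeMean_mono (hp : 0 ≤ p) (hp1 : p ≤ 1) {F G : (ι → Bool) → ℝ} (h : ∀ t, F t ≤ G t) :
    cubeMean p F ≤ cubeMean p G :=
  Finset.sum_le_sum fun t _ => mul_le_mul_of_nonneg_left (h t)
    (Finset.prod_nonneg fun _ _ => bernoulliWeight_nonneg hp hp1 _)

lemma abs_cubeMean_sub_le (hp : 0 ≤ p) (hp1 : p ≤ 1) {F G : (ι → Bool) → ℝ} {c : ℝ}
    (h : ∀ t, |F t - G t| ≤ c) : |cubeMean p F - cubeMean p G| ≤ c := by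
  rw [← cubeMean_sub, abs_le]
  constructor
  · simpa [cubeMean_const] using cubeMean_mono hp hp1 fun t => (abs_le.mp (h t)).1
  · simpa [cubeMean_const] using cubeMean_mono hp hp1 fun t => (abs_le.mp (h t)).2

/-- `(v, t) ↦ (s.piecewise v t, s.piecewise t v)` is a weight-preserving involution of pairs. -/
lemma cubeMean_cubeMean_piecewise (s : Set ι) [DecidablePred (· ∈ s)] (F : (ι → Bool) → ℝ) :
    cubeMean p (fun v => cubeMean p (fun t => F (s.piecewise v t))) = cubeMean p F := by
  have hinv : ∀ v t : ι → Bool, s.piecewise (s.piecewise v t) (s.piecewise t v) = v := by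
    intro v t
    ext i
    by_cases hi : i ∈ s <;> simp [hi]
  let swap : Equiv.Perm ((ι → Bool) × (ι → Bool)) :=
    Function.Involutive.toPerm (fun vt => (s.piecewise vt.1 vt.2, s.piecewise vt.2 vt.1))
      fun vt => Prod.ext (hinv _ _) (hinv _ _)
  have hweight : ∀ v t : ι → Bool,
      (∏ i, bernoulliWeight p (s.piecewise v t i)) * ∏ i, bernoulliWeight p (s.piecewise t v i)
        = (∏ i, bernoulliWeight p (v i)) * ∏ i, bernoulliWeight p (t i) := by
    intro v t
    simp only [← Finset.prod_mul_distrib]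
    exact Finset.prod_congr rfl fun i _ => by by_cases hi : i ∈ s <;> simp [hi, mul_comm]
  calc cubeMean p (fun v => cubeMean p (fun t => F (s.piecewise v t)))
      = ∑ vt : (ι → Bool) × (ι → Bool), (∏ i, bernoulliWeight p (vt.1 i))
          * (∏ i, bernoulliWeight p (vt.2 i)) * F (s.piecewise vt.1 vt.2) := by
        simp only [cubeMean, Fintype.sum_prod_type, Finset.mul_sum, mul_assoc]
    _ = ∑ vt : (ι → Bool) × (ι → Bool), (∏ i, bernoulliWeight p (vt.1 i))
          * (∏ i, bernoulliWeight p (vt.2 i)) * F vt.1 := by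
        rw [← Equiv.sum_comp swap]
        refine Fintype.sum_congr _ _ fun ⟨v, t⟩ => ?_
        change (∏ i, bernoulliWeight p (s.piecewise v t i))
          * (∏ i, bernoulliWeight p (s.piecewise t v i))
          * F (s.piecewise (s.piecewise v t) (s.piecewise t v)) = _
        rw [hweight, hinv]
    _ = cubeMean p F := by
        simp only [cubeMean, Fintype.sum_prod_type, ← Finset.sum_mul, ← Finset.mul_sum,
          sum_prod_bernoulliWeight, mul_one]

lemma cubeMean_eq_update (j : ι) (F : (ι → Bool) → ℝ) :
    cubeMean p F = p * cubeMean p (fun t => F (Function.update t j true))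
      + (1 - p) * cubeMean p (fun t => F (Function.update t j false)) := by
  have hsplit : ∀ v t : ι → Bool, ({j}ᶜ : Set ι).piecewise v t = Function.update v j (t j) := by
    intro v t
    rw [Set.piecewise_compl, Set.piecewise_singleton]
  rw [← cubeMean_cubeMean_piecewise {j}ᶜ F]
  have hinner : ∀ v : ι → Bool, cubeMean p (fun t => F (Function.update v j (t j)))
      = p * F (Function.update v j true) + (1 - p) * F (Function.update v j false) :=
    fun v => cubeMean_comp_eval (fun b => F (Function.update v j b)) j
  simp only [hsplit, hinner]
  rw [cubeMean_add, cubeMean_const_mul, cubeMean_const_mul]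

end cubeMean

section prefixMean

variable {n : ℕ} {p : ℝ} {f : (Fin n → Bool) → ℝ}

/-- `E[f(X) | X_i = x_i for i < k]`: the Doob martingale `M_k` as a function of the sample. -/
def prefixMean (p : ℝ) (f : (Fin n → Bool) → ℝ) (k : ℕ) (x : Fin n → Bool) : ℝ :=
  cubeMean p (fun t => f ({i : Fin n | (i : ℕ) < k}.piecewise x t))

lemma prefixMean_congr {k : ℕ} {x y : Fin n → Bool} (h : ∀ i : Fin n, (i : ℕ) < k → x i = y i) :
    prefixMean p f k x = prefixMean p f k y := by
  unfold prefixMean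
  congr 1
  ext t
  congr 1
  ext i
  by_cases hi : (i : ℕ) < k <;> simp [Set.piecewise, hi, h]

lemma cubeMean_mul_prefixMean {k : ℕ} (φ : (Fin n → Bool) → ℝ)
    (hφ : ∀ x y : Fin n → Bool, (∀ i : Fin n, (i : ℕ) < k → x i = y i) → φ x = φ y) :
    cubeMean p (fun x => φ x * prefixMean p f k x) = cubeMean p (fun x => φ x * f x) := by
  rw [← cubeMean_cubeMean_piecewise {i : Fin n | (i : ℕ) < k} (fun x => φ x * f x)]
  congr 1
  ext v
  rw [prefixMean, ← cubeMean_const_mul]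
  congr 1
  ext t
  rw [hφ ({i : Fin n | (i : ℕ) < k}.piecewise v t) v fun i hi =>
    Set.piecewise_eq_of_mem {i : Fin n | (i : ℕ) < k} v t hi]

lemma prefixMean_eq_update (j : Fin n) (x : Fin n → Bool) :
    prefixMean p f j x = p * prefixMean p f (j + 1) (Function.update x j true)
      + (1 - p) * prefixMean p f (j + 1) (Function.update x j false) := by
  have hshift : ∀ (b : Bool) (t : Fin n → Bool),
      {i : Fin n | (i : ℕ) < j}.piecewise x (Function.update t j b)
        = {i : Fin n | (i : ℕ) < j + 1}.piecewise (Function.update x j b) t := by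
    intro b t
    ext i
    simp only [Set.piecewise, Set.mem_ofPred_eq, Function.update_apply, Fin.ext_iff]
    split_ifs <;> first | rfl | omega
  rw [prefixMean, cubeMean_eq_update j]
  simp only [hshift, prefixMean]

lemma abs_prefixMean_update_sub_le (hp : 0 ≤ p) (hp1 : p ≤ 1) {c : ℝ}
    (hf : BoundedDifferences f c) (k : ℕ) (j : Fin n) (x : Fin n → Bool) :
    |prefixMean p f k (Function.update x j true) - prefixMean p f k (Function.update x j false)|
      ≤ c := by
  refine abs_cubeMean_sub_le hp hp1 fun t => hf _ _ j fun i hij => ?_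
  by_cases hi : (i : ℕ) < k <;> simp [Set.piecewise, hi, hij]

lemma prefixMean_succ_sub (j : Fin n) (x : Fin n → Bool) :
    prefixMean p f (j + 1) x - prefixMean p f j x
      = (if x j then 1 - p else -p) * (prefixMean p f (j + 1) (Function.update x j true)
          - prefixMean p f (j + 1) (Function.update x j false)) := by
  conv_lhs => rw [prefixMean_eq_update, ← Function.update_eq_self j x]
  cases x j <;> simp only [Function.update_idem, if_true,
    Bool.false_eq_true, if_false] <;> ring

lemma abs_prefixMean_succ_sub_le (hp : 0 ≤ p) (hp1 : p ≤ 1) {c : ℝ}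
    (hf : BoundedDifferences f c) (j : Fin n) (x : Fin n → Bool) :
    |prefixMean p f (j + 1) x - prefixMean p f j x| ≤ c := by
  have hweight : |if x j then 1 - p else -p| ≤ 1 := by
    split_ifs <;> rw [abs_le] <;> constructor <;> linarith
  rw [prefixMean_succ_sub, abs_mul]
  simpa using mul_le_mul hweight (abs_prefixMean_update_sub_le hp hp1 hf (j + 1) j x)
    (abs_nonneg _) zero_le_one

lemma sq_prefixMean_succ_sub_le (hp : 0 ≤ p) (hp1 : p ≤ 1) {c : ℝ}
    (hf : BoundedDifferences f c) (j : Fin n) (x : Fin n → Bool) :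
    (prefixMean p f (j + 1) x - prefixMean p f j x) ^ 2
      ≤ c ^ 2 * (if x j then 1 - p else -p) ^ 2 := by
  have hdiff := abs_le.mp (abs_prefixMean_update_sub_le hp hp1 hf (j + 1) j x)
  rw [prefixMean_succ_sub, mul_pow, mul_comm (c ^ 2)]
  exact mul_le_mul_of_nonneg_left (sq_le_sq' hdiff.1 hdiff.2) (sq_nonneg _)

lemma prefixMean_sq_succ_sub_le (hp : 0 ≤ p) (hp1 : p ≤ 1) {c : ℝ}
    (hf : BoundedDifferences f c) (j : Fin n) (x : Fin n → Bool) :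
    prefixMean p (fun y => (prefixMean p f (j + 1) y - prefixMean p f j y) ^ 2) j x
      ≤ c ^ 2 * p * (1 - p) := by
  calc prefixMean p (fun y => (prefixMean p f (j + 1) y - prefixMean p f j y) ^ 2) j x
      ≤ cubeMean p (fun t => c ^ 2 * (if t j then 1 - p else -p) ^ 2) := by
        refine cubeMean_mono hp hp1 fun t => ?_
        have hj : {i : Fin n | (i : ℕ) < j}.piecewise x t j = t j :=
          Set.piecewise_eq_of_notMem _ _ _ (lt_irrefl (j : ℕ))
        simpa only [hj] using sq_prefixMean_succ_sub_le hp hp1 hf j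
          ({i : Fin n | (i : ℕ) < j}.piecewise x t)
    _ = c ^ 2 * p * (1 - p) := by
        rw [cubeMean_comp_eval (fun b => c ^ 2 * (if b then 1 - p else -p) ^ 2)]
        simp only [if_true, Bool.false_eq_true, if_false]
        ring

end prefixMean

section bernoulliVector

variable {Ω : Type*} [MeasurableSpace Ω] {μ : Measure Ω} [IsProbabilityMeasure μ]
  {n : ℕ} {p : ℝ} {X : Fin n → Ω → Bool}

lemma measureReal_coord_preimage_singleton (hXmeas : ∀ i, Measurable (X i))
    (hbern : ∀ i, μ {ω | X i ω = true} = ENNReal.ofReal p) (hp : 0 ≤ p) (i : Fin n) (b : Bool) :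
    μ.real (X i ⁻¹' {b}) = bernoulliWeight p b := by
  have htrue : μ.real (X i ⁻¹' {true}) = p := by
    simp [Measure.real, Set.preimage, hbern i, hp]
  cases b
  · rw [show X i ⁻¹' {false} = (X i ⁻¹' {true})ᶜ by ext; simp,
      probReal_compl_eq_one_sub (hXmeas i (measurableSet_singleton true)), htrue]
    rfl
  · exact htrue

lemma measureReal_preimage_singleton (hXmeas : ∀ i, Measurable (X i)) (hindep : iIndepFun X μ)
    (hbern : ∀ i, μ {ω | X i ω = true} = ENNReal.ofReal p) (hp : 0 ≤ p) (v : Fin n → Bool) :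
    μ.real ((fun ω i => X i ω) ⁻¹' {v}) = ∏ i, bernoulliWeight p (v i) := by
  have hcyl : (fun ω i => X i ω) ⁻¹' {v} = ⋂ i ∈ Finset.univ, X i ⁻¹' {v i} := by
    ext ω
    simp [funext_iff]
  rw [hcyl, Measure.real, hindep.measure_inter_preimage_eq_mul Finset.univ
    fun i _ => measurableSet_singleton (v i), ENNReal.toReal_prod]
  exact Finset.prod_congr rfl fun i _ =>
    measureReal_coord_preimage_singleton hXmeas hbern hp i (v i)

lemma integral_comp_eq_cubeMean (hXmeas : ∀ i, Measurable (X i)) (hindep : iIndepFun X μ)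
    (hbern : ∀ i, μ {ω | X i ω = true} = ENNReal.ofReal p) (hp : 0 ≤ p)
    (g : (Fin n → Bool) → ℝ) :
    ∫ ω, g (fun i => X i ω) ∂μ = cubeMean p g := by
  have hX : Measurable (fun ω i => X i ω) := measurable_pi_lambda _ hXmeas
  rw [← integral_map hX.aemeasurable (measurable_of_countable g).aestronglyMeasurable,
    integral_fintype Integrable.of_finite, cubeMean]
  refine Fintype.sum_congr _ _ fun v => ?_
  rw [map_measureReal_apply hX (measurableSet_singleton v),
    measureReal_preimage_singleton hXmeas hindep hbern hp, smul_eq_mul]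

lemma condExp_ae_eq_prefixMean (hXmeas : ∀ i, Measurable (X i)) (hindep : iIndepFun X μ)
    (hbern : ∀ i, μ {ω | X i ω = true} = ENNReal.ofReal p) (hp : 0 ≤ p)
    (g : (Fin n → Bool) → ℝ) (k : ℕ) :
    μ[fun ω => g (fun i => X i ω) | firstCoords X k]
      =ᵐ[μ] fun ω => prefixMean p g k (fun i => X i ω) := by
  have hX : Measurable (fun ω i => X i ω) := measurable_pi_lambda _ hXmeas
  have hprefix : Measurable (fun ω (i : {i : Fin n // (i : ℕ) < k}) => X i.1 ω) :=
    measurable_pi_lambda _ fun i => hXmeas i.1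
  have hprefix_m :
      Measurable[firstCoords X k] (fun ω (i : {i : Fin n // (i : ℕ) < k}) => X i.1 ω) :=
    comap_measurable _
  have hint : ∀ G : (Fin n → Bool) → ℝ, Integrable (fun ω => G (fun i => X i ω)) μ :=
    fun G => Integrable.of_finite.comp_measurable hX
  refine (ae_eq_condExp_of_forall_setIntegral_eq hprefix.comap_le (hint g)
    (fun _ _ _ => (hint _).integrableOn) (fun s hs _ => ?_) ?_).symm
  · obtain ⟨S, hS, rfl⟩ := hs
    let φ : (Fin n → Bool) → ℝ := fun v =>
      S.indicator 1 (fun i : {i : Fin n // (i : ℕ) < k} => v i.1)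
    have hrestrict : ∀ G : (Fin n → Bool) → ℝ,
        ∫ ω in (fun ω (i : {i : Fin n // (i : ℕ) < k}) => X i.1 ω) ⁻¹' S, G (fun i => X i ω) ∂μ
          = cubeMean p (fun v => φ v * G v) := by
      intro G
      rw [← integral_indicator (hprefix hS), ← integral_comp_eq_cubeMean hXmeas hindep hbern hp]
      congr 1
      ext ω
      by_cases hω : (fun (i : {i : Fin n // (i : ℕ) < k}) => X i.1 ω) ∈ S <;> simp [φ, hω]
    rw [hrestrict, hrestrict]
    exact cubeMean_mul_prefixMean φ fun x y hxy => by
      simp only [φ]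
      congr 2
      exact funext fun i => hxy i i.2
  · let h : ({i : Fin n // (i : ℕ) < k} → Bool) → ℝ := fun u =>
      prefixMean p g k fun i => if hi : (i : ℕ) < k then u ⟨i, hi⟩ else false
    have hfactor : (fun ω => prefixMean p g k (fun i => X i ω))
        = fun ω => h (fun i : {i : Fin n // (i : ℕ) < k} => X i.1 ω) :=
      funext fun ω => prefixMean_congr fun i hi => by simp [hi]
    rw [hfactor]
    exact ((measurable_of_countable h).comp hprefix_m).stronglyMeasurable.aestronglyMeasurable

end bernoulliVector

theorem doob_martingale_increments_general
    {Ω : Type*} [MeasurableSpace Ω] (μ : Measure Ω) [IsProbabilityMeasure μ]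
    {n : ℕ} (p c : ℝ) (hp : 0 ≤ p) (hp1 : p ≤ 1)
    (X : Fin n → Ω → Bool) (hXmeas : ∀ i, Measurable (X i))
    (hindep : iIndepFun X μ)
    (hbern : ∀ i, μ {ω | X i ω = true} = ENNReal.ofReal p)
    (f : (Fin n → Bool) → ℝ) (hf : BoundedDifferences f c)
    (M : ℕ → Ω → ℝ)
    (hM : ∀ k, M k = μ[(fun ω => f (fun i => X i ω)) | firstCoords X k])
    (k : ℕ) (hk1 : 1 ≤ k) (hkn : k ≤ n) :
    (∀ᵐ ω ∂μ, |M k ω - M (k - 1) ω| ≤ c) ∧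
      (∀ᵐ ω ∂μ,
        (μ[(fun ω' => (M k ω' - M (k - 1) ω') ^ 2) | firstCoords X (k - 1)]) ω
          ≤ c ^ 2 * p * (1 - p)) := by
  obtain ⟨j, rfl⟩ : ∃ j : Fin n, (j : ℕ) + 1 = k := ⟨⟨k - 1, by omega⟩, by simp only; omega⟩
  rw [Nat.add_sub_cancel]
  have hM_ae : ∀ m, M m =ᵐ[μ] fun ω => prefixMean p f m (fun i => X i ω) := fun m => by
    rw [hM m]
    exact condExp_ae_eq_prefixMean hXmeas hindep hbern hp f m
  have hsq : (fun ω => (M (j + 1) ω - M j ω) ^ 2) =ᵐ[μ] fun ω =>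
      (prefixMean p f (j + 1) (fun i => X i ω) - prefixMean p f j (fun i => X i ω)) ^ 2 := by
    filter_upwards [hM_ae (j + 1), hM_ae j] with ω hk hj
    rw [hk, hj]
  constructor
  · filter_upwards [hM_ae (j + 1), hM_ae j] with ω hk hj
    rw [hk, hj]
    exact abs_prefixMean_succ_sub_le hp hp1 hf j _
  · filter_upwards [condExp_congr_ae hsq, condExp_ae_eq_prefixMean hXmeas hindep hbern hp
      (fun y => (prefixMean p f (j + 1) y - prefixMean p f j y) ^ 2) j] with ω hcongr hmean
    rw [hcongr, hmean]
    exact prefixMean_sq_succ_sub_le hp hp1 hf j _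

/-- Increments of the Doob martingale `M_k = E[f(X) | X_1, ..., X_k]` of a
bounded-differences function of i.i.d. Bernoulli(p) variables are bounded by `c`
and have conditional variance at most `c² p (1-p)`. -/
theorem doob_martingale_increments
    {Ω : Type*} [MeasurableSpace Ω] (μ : Measure Ω) [IsProbabilityMeasure μ]
    {n : ℕ} (p c : ℝ) (hp : 0 ≤ p) (hp1 : p ≤ 1) (hc : 0 < c)
    (X : Fin n → Ω → Bool) (hXmeas : ∀ i, Measurable (X i))
    (hindep : iIndepFun X μ)
    (hbern : ∀ i, μ {ω | X i ω = true} = ENNReal.ofReal p)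
    (f : (Fin n → Bool) → ℝ) (hf : BoundedDifferences f c)
    (M : ℕ → Ω → ℝ)
    (hM : ∀ k, M k = μ[(fun ω => f (fun i => X i ω)) | firstCoords X k])
    (k : ℕ) (hk1 : 1 ≤ k) (hkn : k ≤ n) :
    (∀ᵐ ω ∂μ, |M k ω - M (k - 1) ω| ≤ c) ∧
      (∀ᵐ ω ∂μ,
        (μ[(fun ω' => (M k ω' - M (k - 1) ω') ^ 2) | firstCoords X (k - 1)]) ω
          ≤ c ^ 2 * p * (1 - p)) :=
  doob_martingale_increments_general μ p c hp hp1 X hXmeas hindep hbern f hf M hM k hk1 hkn
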